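/- arXiv:1502.00711 — 2 statements merged into one kernel-verified Lean document; each statement's English description precedes it below -/
import Mathlib

section
/- Let (Y_k) be a sequence of nonnegative random variables with P(Y_k > x) ≤ A p^x for all x > 0, where A > 0 and 0 < p < 1. Then almost surely limsup_{k→∞} (∑_{i=1}^{k} Y_i) / (k log k) ≤ 2 / log(1/p). -/
/-!
Put `L = log (1/p)`. Since `p ^ (2 log k / L) = k⁻²`, the tail bound gives
`P (Y k > 2 log k / L) ≤ A k⁻²`, which is summable, so by Borel–Cantelli almost surely
`Y k ≤ 2 log k / L` for all large `k`. Then the partial sums are at most a constant plus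
`k · 2 log k / L`, and dividing by `k log k` gives the bound on the limsup.
-/

open MeasureTheory Filter Finset

theorem Real.rpow_div_log_inv_mul_log {p x : ℝ} (hp : 0 < p) (hp1 : p ≠ 1) (hx : 0 < x)
    (c : ℝ) : p ^ (c / Real.log (1 / p) * Real.log x) = x ^ (-c) := by
  have hL : Real.log p ≠ 0 := Real.log_ne_zero_of_pos_of_ne_one hp hp1
  rw [Real.rpow_def_of_pos hp, Real.rpow_def_of_pos hx, one_div, Real.log_inv]
  congr 1
  field_simp

theorem MeasureTheory.ae_eventually_notMem_of_le_ofReal {α : Type*} [MeasurableSpace α]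
    {μ : Measure α} {s : ℕ → Set α} {a : ℕ → ℝ} (ha : Summable a)
    (h : ∀ᶠ k in atTop, μ (s k) ≤ ENNReal.ofReal (a k)) :
    ∀ᵐ ω ∂μ, ∀ᶠ k in atTop, ω ∉ s k := by
  obtain ⟨N, hN⟩ := eventually_atTop.1 h
  have hsum : ∑' k, μ (s (k + N)) ≠ ⊤ :=
    ne_top_of_le_ne_top
      (ENNReal.tsum_coe_ne_top_iff_summable.2 ((summable_nat_add_iff N).2 ha).toNNReal)
      (ENNReal.tsum_le_tsum fun k => hN (k + N) (Nat.le_add_left N k))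
  filter_upwards [ae_eventually_notMem hsum] with ω hω
  obtain ⟨M, hM⟩ := eventually_atTop.1 hω
  refine eventually_atTop.2 ⟨M + N, fun k hk => ?_⟩
  simpa [Nat.sub_add_cancel (le_of_add_le_right hk)] using hM (k - N) (by omega)

theorem exists_sum_Icc_le_add_mul_log {u : ℕ → ℝ} {c : ℝ} (hc : 0 ≤ c)
    (h : ∀ᶠ i in atTop, u i ≤ c * Real.log i) :
    ∃ C, ∀ᶠ k in atTop, ∑ i ∈ Icc 1 k, u i ≤ C + c * (k * Real.log k) := by
  obtain ⟨N, hN⟩ := eventually_atTop.1 h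
  refine ⟨∑ i ∈ Icc 1 N, u i, eventually_atTop.2 ⟨N, fun k hk => ?_⟩⟩
  have htail : ∑ i ∈ Ioc N k, u i ≤ c * (k * Real.log k) :=
    calc ∑ i ∈ Ioc N k, u i ≤ ∑ _i ∈ Ioc N k, c * Real.log k := by
          refine sum_le_sum fun i hi => (hN i (mem_Ioc.1 hi).1.le).trans ?_
          have hi0 : (0 : ℝ) < i := by exact_mod_cast (Nat.zero_le N).trans_lt (mem_Ioc.1 hi).1
          gcongr
          exact_mod_cast (mem_Ioc.1 hi).2
      _ = (k - N : ℕ) * (c * Real.log k) := by rw [sum_const, Nat.card_Ioc, nsmul_eq_mul]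
      _ ≤ k * (c * Real.log k) := by
          gcongr
          exact Nat.sub_le k N
      _ = c * (k * Real.log k) := by ring
  have hIcc : ∀ n, Icc 1 n = Ioc 0 n := Icc_succ_left_eq_Ioc 0
  rw [hIcc, hIcc, ← sum_Ioc_consecutive _ (Nat.zero_le N) hk]
  exact add_le_add_right htail _

theorem limsup_sum_Icc_div_mul_log_le {u : ℕ → ℝ} {c : ℝ} (hu : ∀ i, 0 ≤ u i) (hc : 0 ≤ c)
    (h : ∀ᶠ i in atTop, u i ≤ c * Real.log i) :
    limsup (fun k : ℕ => (∑ i ∈ Icc 1 k, u i) / (k * Real.log k)) atTop ≤ c := by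
  obtain ⟨C, hC⟩ := exists_sum_Icc_le_add_mul_log hc h
  have hklogk : Tendsto (fun k : ℕ => (k : ℝ) * Real.log k) atTop atTop :=
    tendsto_natCast_atTop_atTop.atTop_mul_atTop₀
      (Real.tendsto_log_atTop.comp tendsto_natCast_atTop_atTop)
  have hbound : Tendsto (fun k : ℕ => C / (k * Real.log k) + c) atTop (nhds c) := by
    simpa using (tendsto_const_nhds.div_atTop hklogk).add (tendsto_const_nhds (x := c))
  have hle : ∀ᶠ k : ℕ in atTop,
      (∑ i ∈ Icc 1 k, u i) / (k * Real.log k) ≤ C / (k * Real.log k) + c := by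
    filter_upwards [hC, hklogk.eventually_gt_atTop 0] with k hk hpos
    rw [div_add' _ _ _ hpos.ne', div_le_div_iff_of_pos_right hpos]
    linarith
  have hcobdd : IsCoboundedUnder (· ≤ ·) atTop
      (fun k : ℕ => (∑ i ∈ Icc 1 k, u i) / (k * Real.log k)) :=
    isCoboundedUnder_le_of_le atTop fun k =>
      div_nonneg (sum_nonneg fun i _ => hu i)
        (mul_nonneg k.cast_nonneg (Real.log_natCast_nonneg k))
  exact (limsup_le_limsup hle hcobdd hbound.isBoundedUnder_le).trans_eq hbound.limsup_eq

theorem stmt2_general {Ω : Type*} [MeasurableSpace Ω] (P : Measure Ω) [IsProbabilityMeasure P]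
    (Y : ℕ → Ω → ℝ) (A p : ℝ) (hp : 0 < p) (hp1 : p < 1)
    (hnonneg : ∀ k ω, 0 ≤ Y k ω)
    (htail : ∀ k, ∀ x : ℝ, 0 < x → P {ω | Y k ω > x} ≤ ENNReal.ofReal (A * p ^ x)) :
    ∀ᵐ ω ∂P,
      Filter.limsup (fun k : ℕ => (∑ i ∈ Finset.Icc 1 k, Y i ω) / (k * Real.log k)) atTop
        ≤ 2 / Real.log (1 / p) := by
  have hL : 0 < Real.log (1 / p) := Real.log_pos (one_lt_one_div hp hp1)
  have hsummable : Summable fun k : ℕ => A * (k : ℝ) ^ (-2 : ℝ) :=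
    (Real.summable_nat_rpow.2 (by norm_num)).mul_left A
  have hbound : ∀ᶠ k : ℕ in atTop,
      P {ω | Y k ω > 2 / Real.log (1 / p) * Real.log k} ≤ ENNReal.ofReal (A * k ^ (-2 : ℝ)) := by
    filter_upwards [eventually_ge_atTop 2] with k hk
    have hk : (1 : ℝ) < k := by exact_mod_cast hk
    rw [← Real.rpow_div_log_inv_mul_log hp hp1.ne (by linarith)]
    exact htail k _ (by have := Real.log_pos hk; positivity)
  filter_upwards [ae_eventually_notMem_of_le_ofReal hsummable hbound] with ω hω
  exact limsup_sum_Icc_div_mul_log_le (fun i => hnonneg i ω) (by positivity)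
    (hω.mono fun k hk => not_lt.1 hk)

theorem stmt2 {Ω : Type*} [MeasurableSpace Ω] (P : Measure Ω) [IsProbabilityMeasure P]
    (Y : ℕ → Ω → ℝ) (A p : ℝ) (hA : 0 < A) (hp : 0 < p) (hp1 : p < 1)
    (hmeas : ∀ k, Measurable (Y k))
    (hnonneg : ∀ k ω, 0 ≤ Y k ω)
    (htail : ∀ k, ∀ x : ℝ, 0 < x → P {ω | Y k ω > x} ≤ ENNReal.ofReal (A * p ^ x)) :
    ∀ᵐ ω ∂P,
      Filter.limsup (fun k : ℕ => (∑ i ∈ Finset.Icc 1 k, Y i ω) / (k * Real.log k)) atTop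
        ≤ 2 / Real.log (1 / p) :=
  stmt2_general P Y A p hp hp1 hnonneg htail
end

section
/- Let ν : ℝ → ℝ be defined by ν(α) = E[log ∑_{i ∈ I} r_i^α], where I is a random finite nonempty index set and r_i are random variables taking values in [r_inf, r_sup] with 0 < r_inf ≤ r_sup < 1, the number of indices is bounded between N_inf ≥ 3 and N_sup < ∞, and all relevant expectations are finite. Then ν is strictly decreasing and Lipschitz, ν(0) > 0, and there exists a unique α₀ > 0 with ν(α₀) = 0. -/
/-!
Pointwise, writing `r ^ β = r ^ (β - α) * r ^ α` and bounding `r ^ (β - α)` between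
`r_inf ^ (β - α)` and `r_sup ^ (β - α)` gives, for `α ≤ β`,
`(β - α) log r_inf ≤ log ∑ r_i ^ β - log ∑ r_i ^ α ≤ (β - α) log r_sup`.
Integrating, `ν` has slopes in `[log r_inf, log r_sup]`, a range of negative numbers; so `ν` is
strictly decreasing, Lipschitz, and tends to `-∞`. Since `ν 0 = E[log |I|] ≥ log 3 > 0`, the
intermediate value theorem gives the zero.
-/

open MeasureTheory Filter

section Slope

variable {ν : ℝ → ℝ}

theorem strictAnti_of_slope_le {c : ℝ} (hc : c < 0)
    (hslope : ∀ α β, α ≤ β → ν β ≤ ν α + (β - α) * c) : StrictAnti ν := fun α β hαβ => by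
  have := hslope α β hαβ.le
  nlinarith [sub_pos.2 hαβ]

theorem lipschitzWith_of_antitone_of_slope_ge {K : NNReal} (hanti : Antitone ν)
    (hslope : ∀ α β, α ≤ β → ν α - (β - α) * K ≤ ν β) : LipschitzWith K ν := by
  refine LipschitzWith.of_le_add_mul K fun x y => ?_
  rcases le_total x y with hxy | hyx
  · have := hslope x y hxy
    rw [Real.dist_eq, abs_of_nonpos (sub_nonpos.2 hxy)]
    linarith
  · have := hanti hyx
    have : 0 ≤ (K : ℝ) * dist x y := by positivity
    linarith

theorem existsUnique_pos_eq_zero_of_slope_le {c : ℝ} (hc : c < 0)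
    (hslope : ∀ α β, α ≤ β → ν β ≤ ν α + (β - α) * c) (hcont : Continuous ν) (h0 : 0 < ν 0) :
    ∃! α₀, 0 < α₀ ∧ ν α₀ = 0 := by
  -- chosen so that the slope bound from `0` gives `ν β ≤ c`
  set β := ν 0 / -c + 1
  have hβ : 0 < β := add_pos (div_pos h0 (neg_pos.2 hc)) one_pos
  have hνβ : ν β < 0 := by
    have hβc : (β - 0) * c = -ν 0 + c := by
      have : c ≠ 0 := hc.ne
      simp only [β]
      field_simp
      ring
    have := hslope 0 β hβ.le
    linarith
  obtain ⟨α₀, hα₀, hνα₀⟩ := intermediate_value_Ioo' hβ.le hcont.continuousOn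
    (show (0 : ℝ) ∈ Set.Ioo (ν β) (ν 0) from ⟨hνβ, h0⟩)
  exact ⟨α₀, ⟨hα₀.1, hνα₀⟩, fun γ hγ =>
    (strictAnti_of_slope_le hc hslope).injective (hγ.2.trans hνα₀.symm)⟩

end Slope

section SumRpow

variable {ι : Type*} {s : Finset ι} {r : ι → ℝ} {α β : ℝ}

theorem sum_rpow_le_rpow_mul_sum_rpow {b : ℝ} (hr : ∀ i ∈ s, 0 < r i) (hrb : ∀ i ∈ s, r i ≤ b)
    (hαβ : α ≤ β) : ∑ i ∈ s, r i ^ β ≤ b ^ (β - α) * ∑ i ∈ s, r i ^ α := by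
  rw [Finset.mul_sum]
  refine Finset.sum_le_sum fun i hi => ?_
  rw [← sub_add_cancel β α, Real.rpow_add (hr i hi), add_sub_cancel_right]
  exact mul_le_mul_of_nonneg_right (Real.rpow_le_rpow (hr i hi).le (hrb i hi) (sub_nonneg.2 hαβ))
    (Real.rpow_nonneg (hr i hi).le α)

theorem rpow_mul_sum_rpow_le_sum_rpow {a : ℝ} (ha : 0 < a) (har : ∀ i ∈ s, a ≤ r i)
    (hαβ : α ≤ β) : a ^ (β - α) * ∑ i ∈ s, r i ^ α ≤ ∑ i ∈ s, r i ^ β := by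
  rw [Finset.mul_sum]
  refine Finset.sum_le_sum fun i hi => ?_
  have hri : 0 < r i := ha.trans_le (har i hi)
  rw [← sub_add_cancel β α, Real.rpow_add hri, add_sub_cancel_right]
  exact mul_le_mul_of_nonneg_right (Real.rpow_le_rpow ha.le (har i hi) (sub_nonneg.2 hαβ))
    (Real.rpow_nonneg hri.le α)

theorem sum_rpow_pos (hs : s.Nonempty) (hr : ∀ i ∈ s, 0 < r i) (γ : ℝ) :
    0 < ∑ i ∈ s, r i ^ γ :=
  Finset.sum_pos (fun i hi => Real.rpow_pos_of_pos (hr i hi) γ) hs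

theorem log_sum_rpow_le {b : ℝ} (hs : s.Nonempty) (hr : ∀ i ∈ s, 0 < r i)
    (hrb : ∀ i ∈ s, r i ≤ b) (hαβ : α ≤ β) :
    Real.log (∑ i ∈ s, r i ^ β) ≤ Real.log (∑ i ∈ s, r i ^ α) + (β - α) * Real.log b := by
  obtain ⟨i, hi⟩ := hs
  have hb : 0 < b := (hr i hi).trans_le (hrb i hi)
  calc Real.log (∑ i ∈ s, r i ^ β)
      ≤ Real.log (b ^ (β - α) * ∑ i ∈ s, r i ^ α) :=
        Real.log_le_log (sum_rpow_pos ⟨i, hi⟩ hr β) (sum_rpow_le_rpow_mul_sum_rpow hr hrb hαβ)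
    _ = Real.log (∑ i ∈ s, r i ^ α) + (β - α) * Real.log b := by
        rw [Real.log_mul (Real.rpow_pos_of_pos hb _).ne' (sum_rpow_pos ⟨i, hi⟩ hr α).ne',
          Real.log_rpow hb, add_comm]

theorem log_sum_rpow_ge {a : ℝ} (hs : s.Nonempty) (ha : 0 < a) (har : ∀ i ∈ s, a ≤ r i)
    (hαβ : α ≤ β) :
    Real.log (∑ i ∈ s, r i ^ α) + (β - α) * Real.log a ≤ Real.log (∑ i ∈ s, r i ^ β) := by
  have hr : ∀ i ∈ s, 0 < r i := fun i hi => ha.trans_le (har i hi)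
  calc Real.log (∑ i ∈ s, r i ^ α) + (β - α) * Real.log a
      = Real.log (a ^ (β - α) * ∑ i ∈ s, r i ^ α) := by
        rw [Real.log_mul (Real.rpow_pos_of_pos ha _).ne' (sum_rpow_pos hs hr α).ne',
          Real.log_rpow ha, add_comm]
    _ ≤ Real.log (∑ i ∈ s, r i ^ β) :=
        Real.log_le_log (mul_pos (Real.rpow_pos_of_pos ha _) (sum_rpow_pos hs hr α))
          (rpow_mul_sum_rpow_le_sum_rpow ha har hαβ)

end SumRpow

section Integral

variable {Ω : Type*} [MeasurableSpace Ω] {P : Measure Ω} [IsProbabilityMeasure P]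
  {f g : Ω → ℝ} {c : ℝ}

theorem integral_le_integral_add_const (hf : Integrable f P) (hg : Integrable g P)
    (h : ∀ ω, f ω ≤ g ω + c) : ∫ ω, f ω ∂P ≤ ∫ ω, g ω ∂P + c := by
  calc ∫ ω, f ω ∂P ≤ ∫ ω, g ω + c ∂P := integral_mono hf (hg.add (integrable_const c)) h
    _ = ∫ ω, g ω ∂P + c := by simp [integral_add hg (integrable_const c)]

theorem integral_add_const_le_integral (hf : Integrable f P) (hg : Integrable g P)
    (h : ∀ ω, g ω + c ≤ f ω) : ∫ ω, g ω ∂P + c ≤ ∫ ω, f ω ∂P := by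
  calc ∫ ω, g ω ∂P + c = ∫ ω, g ω + c ∂P := by simp [integral_add hg (integrable_const c)]
    _ ≤ ∫ ω, f ω ∂P := integral_mono (hg.add (integrable_const c)) hf h

end Integral

theorem stmt5 {Ω ι : Type*} [MeasurableSpace Ω] (P : Measure Ω) [IsProbabilityMeasure P]
    (I : Ω → Finset ι) (r : ι → Ω → ℝ) (rinf rsup : ℝ) (Ninf Nsup : ℕ)
    (hrinf : 0 < rinf) (hrr : rinf ≤ rsup) (hrsup : rsup < 1)
    (hNinf : 3 ≤ Ninf) (hcard : ∀ ω, Ninf ≤ (I ω).card ∧ (I ω).card ≤ Nsup)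
    (hr : ∀ ω, ∀ i ∈ I ω, rinf ≤ r i ω ∧ r i ω ≤ rsup)
    (ν : ℝ → ℝ)
    (hν : ∀ α : ℝ, ν α = ∫ ω, Real.log (∑ i ∈ I ω, r i ω ^ α) ∂P)
    (hint : ∀ α : ℝ, Integrable (fun ω => Real.log (∑ i ∈ I ω, r i ω ^ α)) P) :
    StrictAnti ν ∧ (∃ Klip : NNReal, LipschitzWith Klip ν) ∧ 0 < ν 0 ∧
      ∃! α₀ : ℝ, 0 < α₀ ∧ ν α₀ = 0 := by
  have hne : ∀ ω, (I ω).Nonempty := fun ω =>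
    Finset.card_pos.1 (by have := (hcard ω).1; omega)
  have hup : ∀ α β, α ≤ β → ν β ≤ ν α + (β - α) * Real.log rsup := fun α β hαβ => by
    rw [hν, hν]
    exact integral_le_integral_add_const (hint β) (hint α) fun ω =>
      log_sum_rpow_le (hne ω) (fun i hi => hrinf.trans_le (hr ω i hi).1)
        (fun i hi => (hr ω i hi).2) hαβ
  have hlow : ∀ α β, α ≤ β → ν α + (β - α) * Real.log rinf ≤ ν β := fun α β hαβ => by
    rw [hν, hν]
    exact integral_add_const_le_integral (hint β) (hint α) fun ω =>
      log_sum_rpow_ge (hne ω) hrinf (fun i hi => (hr ω i hi).1) hαβ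
  have hlog_rsup : Real.log rsup < 0 := Real.log_neg (hrinf.trans_le hrr) hrsup
  have hanti : StrictAnti ν := strictAnti_of_slope_le hlog_rsup hup
  have hlip : LipschitzWith (Real.nnabs (Real.log rinf)) ν :=
    lipschitzWith_of_antitone_of_slope_ge hanti.antitone fun α β hαβ => by
      have := hlow α β hαβ
      rw [Real.coe_nnabs]
      nlinarith [neg_abs_le (Real.log rinf), sub_nonneg.2 hαβ]
  have hν0 : 0 < ν 0 := by
    have hlog3 : ∀ ω, Real.log 3 ≤ Real.log (∑ i ∈ I ω, r i ω ^ (0 : ℝ)) := fun ω => by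
      simp only [Real.rpow_zero, Finset.sum_const, nsmul_eq_mul, mul_one]
      gcongr
      exact_mod_cast hNinf.trans (hcard ω).1
    calc 0 < Real.log 3 := Real.log_pos (by norm_num)
      _ = ∫ _, Real.log 3 ∂P := by simp
      _ ≤ ν 0 := hν 0 ▸ integral_mono (integrable_const _) (hint 0) hlog3
  exact ⟨hanti, ⟨_, hlip⟩, hν0,
    existsUnique_pos_eq_zero_of_slope_le hlog_rsup hup hlip.continuous hν0⟩
end
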